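/- arXiv:1910.06928 — 2 statements merged into one kernel-verified Lean document; each statement's English description precedes it below -/
import Mathlib

section
/- For all α, β ∈ ℂ with β ≠ 0 and every sequence F : ℕ → ℂ, B_{−α/β, 1/β} (B_{α,β} F) = F; that is, the generalized binomial transform B_{α,β} is invertible with inverse B_{−α/β, 1/β}. -/
/-!
Binomial transforms compose like affine maps: `B_{γ,δ} ∘ B_{α,β} = B_{γ + δα, δβ}`, by swapping
the double sum and collapsing the inner one with the binomial theorem. For `γ = -α/β`, `δ = 1/β`
the composite is `B_{0,1}`, which is the identity.
-/

noncomputable def binTransform (α β : ℂ) (F : ℕ → ℂ) : ℕ → ℂ :=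
  fun n => ∑ k ∈ Finset.range (n + 1), (n.choose k : ℂ) * α ^ (n - k) * β ^ k * F k

open Finset

theorem Nat.sum_Ico_choose_mul_choose_mul_pow {R : Type*} [CommSemiring R] (a b : R) {j n : ℕ}
    (hjn : j ≤ n) :
    ∑ k ∈ Ico j (n + 1), (n.choose k * k.choose j : R) * a ^ (k - j) * b ^ (n - k) =
      n.choose j * (a + b) ^ (n - j) := by
  rw [sum_Ico_eq_sum_range, show n + 1 - j = n - j + 1 by omega, add_pow, mul_sum]
  refine sum_congr rfl fun m _ => ?_
  rw [← Nat.cast_mul, Nat.choose_mul (Nat.le_add_right j m), Nat.add_sub_cancel_left,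
    Nat.sub_add_eq]
  push_cast
  ring

theorem binTransform_binTransform (α β γ δ : ℂ) (F : ℕ → ℂ) :
    binTransform γ δ (binTransform α β F) = binTransform (γ + δ * α) (δ * β) F := by
  funext n
  simp only [binTransform, mul_sum, range_eq_Ico]
  rw [← sum_Ico_Ico_comm]
  refine sum_congr rfl fun j hj => ?_
  have hjn : j ≤ n := Nat.lt_succ_iff.mp (mem_Ico.mp hj).2
  rw [add_comm γ, ← Nat.sum_Ico_choose_mul_choose_mul_pow (δ * α) γ hjn]
  simp only [sum_mul]
  refine sum_congr rfl fun k hk => ?_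
  obtain ⟨m, rfl⟩ := Nat.exists_eq_add_of_le (mem_Ico.mp hk).1
  rw [Nat.add_sub_cancel_left]
  ring

theorem binTransform_zero_one (F : ℕ → ℂ) : binTransform 0 1 F = F := by
  funext n
  rw [binTransform, sum_range_succ, sum_eq_zero fun k hk => ?_]
  · simp
  · simp [Nat.sub_ne_zero_of_lt (mem_range.mp hk)]

/-- For `β ≠ 0`, the generalized binomial transform `B_{α,β}` is inverted by
`B_{-α/β, 1/β}`. -/
theorem stmt_2 (α β : ℂ) (hβ : β ≠ 0) (F : ℕ → ℂ) :
    binTransform (-α / β) (1 / β) (binTransform α β F) = F := by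
  rw [binTransform_binTransform, show -α / β + 1 / β * α = 0 by ring,
    one_div_mul_cancel hβ, binTransform_zero_one]
end

section
/- The set of p-recursive sequences is closed under the generalized binomial transform: let F : ℕ → ℂ be p-recursive, i.e., suppose there exist d ∈ ℕ and polynomials p_0, …, p_d ∈ ℂ[X] with p_d ≠ 0 such that ∑_{i=0}^{d} p_i(n) F_{n+i} = 0 for all n ∈ ℕ. Then for all α, β ∈ ℂ the sequence B_{α,β} F is p-recursive: there exist e ∈ ℕ and polynomials q_0, …, q_e ∈ ℂ[X], not all zero, such that ∑_{j=0}^{e} q_j(n) (B_{α,β} F)_{n+j} = 0 for all n ∈ ℕ. -/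
open Finset Polynomial

section RecurrenceOperator

variable {R : Type*} [CommRing R]

/-- `recurrenceOp L` is the operator `∑ⱼ (L.coeff j)(n) Sʲ` on sequences, `S` the shift: the outer
variable of `L` stands for `S`, the inner one for the index `n`. -/
noncomputable def recurrenceOp : R[X][X] →+ (ℕ → R) →ₗ[R] ℕ → R where
  toFun L :=
    { toFun := fun G n => L.sum fun j q => q.eval (n : R) * G (n + j)
      map_add' := fun G₁ G₂ => by funext n; simp [Polynomial.sum, mul_add, sum_add_distrib]
      map_smul' := fun c G => by funext n; simp [Polynomial.sum, mul_sum, mul_left_comm] }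
  map_zero' := by ext; simp
  map_add' L₁ L₂ := by ext G n; simp [sum_add_index, add_mul]

theorem recurrenceOp_eq_sum_range {L : R[X][X]} {e : ℕ} (hL : L.natDegree ≤ e)
    (G : ℕ → R) (n : ℕ) :
    recurrenceOp L G n = ∑ j ∈ range (e + 1), (L.coeff j).eval (n : R) * G (n + j) :=
  sum_over_range' L (f := fun j q => q.eval (n : R) * G (n + j))
    (fun _ => by rw [eval_zero, zero_mul]) _ (Nat.lt_succ_of_le hL)

theorem recurrenceOp_monomial (j : ℕ) (q : R[X]) (G : ℕ → R) (n : ℕ) :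
    recurrenceOp (monomial j q) G n = q.eval (n : R) * G (n + j) :=
  sum_monomial_index q (fun j q => q.eval (n : R) * G (n + j)) (by rw [eval_zero, zero_mul])

theorem recurrenceOp_C_mul (q : R[X]) (L : R[X][X]) (G : ℕ → R) (n : ℕ) :
    recurrenceOp (C q * L) G n = q.eval (n : R) * recurrenceOp L G n := by
  induction L using Polynomial.induction_on' with
  | add L₁ L₂ h₁ h₂ => simp only [mul_add, map_add, LinearMap.add_apply, Pi.add_apply, h₁, h₂]
  | monomial j r => simp only [C_mul_monomial, recurrenceOp_monomial, eval_mul, mul_assoc]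

theorem recurrenceOp_map_taylor_mul_X (L : R[X][X]) (G : ℕ → R) (n : ℕ) :
    recurrenceOp (L.map (taylorAlgHom (1 : R) : R[X] →+* R[X]) * X) G n =
      recurrenceOp L G (n + 1) := by
  induction L using Polynomial.induction_on' with
  | add L₁ L₂ h₁ h₂ =>
    simp only [Polynomial.map_add, add_mul, map_add, LinearMap.add_apply, Pi.add_apply, h₁, h₂]
  | monomial j q =>
    simp only [map_monomial, monomial_mul_X, recurrenceOp_monomial]
    simp [taylor_eval, add_right_comm n 1 j, add_assoc]

theorem recurrenceOp_mul_map_C (L : R[X][X]) (Q : R[X]) (G : ℕ → R) :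
    recurrenceOp (L * Q.map C) G = recurrenceOp L (recurrenceOp (Q.map C) G) := by
  induction L using Polynomial.induction_on' with
  | add L₁ L₂ h₁ h₂ => simp only [add_mul, map_add, LinearMap.add_apply, h₁, h₂]
  | monomial j q =>
    induction Q using Polynomial.induction_on' with
    | add Q₁ Q₂ h₁ h₂ =>
      simp only [Polynomial.map_add, mul_add, map_add, LinearMap.add_apply, h₁, h₂]
    | monomial t a =>
      funext n
      simp only [map_monomial, monomial_mul_monomial, recurrenceOp_monomial, eval_mul, eval_C,
        add_assoc, mul_assoc]

theorem exists_fin_recurrence_of_recurrenceOp_eq_zero {L : R[X][X]} (hL : L ≠ 0) {G : ℕ → R}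
    (hG : recurrenceOp L G = 0) :
    ∃ (e : ℕ) (q : Fin (e + 1) → R[X]), (∃ j, q j ≠ 0) ∧
      ∀ n : ℕ, ∑ j : Fin (e + 1), (q j).eval (n : R) * G (n + j) = 0 := by
  refine ⟨L.natDegree, fun j => L.coeff j, ⟨Fin.last _, by simpa using hL⟩, fun n => ?_⟩
  rw [Fin.sum_univ_eq_sum_range (fun j => (L.coeff j).eval (n : R) * G (n + j)),
    ← recurrenceOp_eq_sum_range le_rfl, hG, Pi.zero_apply]

end RecurrenceOperator

section BinomialTransform

variable (α β : ℂ)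

theorem binTransform_add (H₁ H₂ : ℕ → ℂ) (n : ℕ) :
    binTransform α β (fun k => H₁ k + H₂ k) n = binTransform α β H₁ n + binTransform α β H₂ n := by
  simp only [binTransform, mul_add, sum_add_distrib]

theorem binTransform_const_mul (a : ℂ) (H : ℕ → ℂ) (n : ℕ) :
    binTransform α β (fun k => a * H k) n = a * binTransform α β H n := by
  simp only [binTransform, mul_sum]
  exact sum_congr rfl fun _ _ => by ring

theorem binTransform_sum {ι : Type*} (s : Finset ι) (H : ι → ℕ → ℂ) (n : ℕ) :
    binTransform α β (fun k => ∑ i ∈ s, H i k) n = ∑ i ∈ s, binTransform α β (H i) n := by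
  simp only [binTransform, mul_sum]
  exact sum_comm

theorem binTransform_succ (H : ℕ → ℂ) (n : ℕ) :
    binTransform α β H (n + 1) =
      α * binTransform α β H n + β * binTransform α β (fun k => H (k + 1)) n := by
  have pascal := sum_choose_succ_mul (fun i j => α ^ j * β ^ i * H i) n
  simp only [binTransform, mul_sum, mul_assoc] at pascal ⊢
  rw [pascal]
  congr 1 <;> refine sum_congr rfl fun k hk => ?_
  · rw [Nat.sub_add_comm (mem_range_succ_iff.mp hk), pow_succ]
    ring
  · ring

theorem binTransform_natCast_mul_succ (H : ℕ → ℂ) (n : ℕ) :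
    binTransform α β (fun k => (k : ℂ) * H k) (n + 1) =
      (n + 1) * β * binTransform α β (fun k => H (k + 1)) n := by
  rw [binTransform, sum_range_succ', binTransform, mul_sum]
  simp only [Nat.cast_zero, zero_mul, mul_zero, add_zero]
  refine sum_congr rfl fun k _ => ?_
  have hchoose : ((n + 1).choose (k + 1) : ℂ) * (k + 1) = (n + 1) * n.choose k := by
    exact_mod_cast (Nat.add_one_mul_choose_eq n k).symm
  rw [Nat.add_sub_add_right, Nat.cast_succ k]
  linear_combination α ^ (n - k) * β ^ (k + 1) * H (k + 1) * hchoose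

end BinomialTransform

section TransformedRecurrence

variable (α β : ℂ)

theorem smul_binTransform_shift (H : ℕ → ℂ) :
    β • binTransform α β (fun k => H (k + 1)) =
      recurrenceOp ((X - C α).map C) (binTransform α β H) := by
  funext n
  rw [Polynomial.map_sub, map_X, map_C, sub_eq_add_neg, ← C_neg, ← monomial_one_one_eq_X,
    ← monomial_zero_left, map_add, LinearMap.add_apply, Pi.add_apply, recurrenceOp_monomial,
    recurrenceOp_monomial, binTransform_succ]
  simp only [Pi.smul_apply, smul_eq_mul, eval_one, eval_neg, eval_C, add_zero]
  ring

theorem pow_smul_binTransform_shift (i : ℕ) (H : ℕ → ℂ) :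
    β ^ i • binTransform α β (fun k => H (k + i)) =
      recurrenceOp (((X - C α) ^ i).map C) (binTransform α β H) := by
  induction i generalizing H with
  | zero =>
    funext n
    rw [pow_zero (X - C α), Polynomial.map_one, ← monomial_zero_one, recurrenceOp_monomial]
    simp
  | succ i ih =>
    rw [pow_succ (X - C α), Polynomial.map_mul, recurrenceOp_mul_map_C, ← smul_binTransform_shift,
      map_smul, ← ih, smul_smul, pow_succ']
    simp only [add_assoc]

theorem exists_recurrenceOp_binTransform_mul (p : ℂ[X]) {r : ℕ} (hr : p.natDegree ≤ r) :
    ∃ L : ℂ[X][X], L.natDegree ≤ r ∧ L.coeff r = taylor (r : ℂ) p ∧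
      ∀ H : ℕ → ℂ, (fun n => binTransform α β (fun k => p.eval (k : ℂ) * H k) (n + r)) =
        recurrenceOp L (binTransform α β H) := by
  induction p using Polynomial.recOnHorner generalizing r with
  | M0 => exact ⟨0, by simp, by simp, fun H => by funext n; simp [binTransform]⟩
  | MC p a _ _ ih =>
    rw [natDegree_add_C] at hr
    obtain ⟨L, hdeg, hcoeff, hL⟩ := ih hr
    refine ⟨L + monomial r (C a), ?_, ?_, fun H => ?_⟩
    · exact natDegree_add_le_of_degree_le hdeg (natDegree_monomial_le _)
    · simp [hcoeff]
    · funext n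
      simp only [eval_add, eval_C, add_mul, binTransform_add, binTransform_const_mul, map_add,
        LinearMap.add_apply, Pi.add_apply, ← hL, recurrenceOp_monomial]
  | MX p hp ih =>
    rw [natDegree_mul_X hp] at hr
    obtain ⟨r, rfl⟩ : ∃ r', r = r' + 1 := ⟨r - 1, by omega⟩
    obtain ⟨L, hdeg, hcoeff, hL⟩ := ih (by omega : p.natDegree ≤ r)
    -- `B (k H') (m + 1) = (m + 1) (B H' (m + 1) - α B H' m)` with `H' = p(k) H` and `m = n + r`
    refine ⟨C (X + C ((r : ℂ) + 1)) *
      (L.map (taylorAlgHom (1 : ℂ) : ℂ[X] →+* ℂ[X]) * X - C (C α) * L), ?_, ?_, fun H => ?_⟩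
    · refine (natDegree_C_mul_le _ _).trans ((natDegree_sub_le _ _).trans (max_le ?_ ?_))
      · exact natDegree_mul_le.trans (add_le_add (natDegree_map_le.trans hdeg) natDegree_X_le)
      · exact (natDegree_C_mul_le _ _).trans (hdeg.trans r.le_succ)
    · rw [coeff_C_mul, coeff_sub, coeff_mul_X, coeff_map, coeff_C_mul,
        coeff_eq_zero_of_natDegree_lt (Nat.lt_succ_of_le hdeg), hcoeff]
      simp [taylor_taylor, add_comm, mul_comm]
    · funext n
      rw [recurrenceOp_C_mul, map_sub, LinearMap.sub_apply, Pi.sub_apply, recurrenceOp_C_mul,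
        recurrenceOp_map_taylor_mul_X, ← hL]
      have hX : (fun k : ℕ => (p * X).eval (k : ℂ) * H k) =
          fun k : ℕ => (k : ℂ) * (p.eval (k : ℂ) * H k) := by
        funext k
        rw [eval_mul_X]
        ring
      simp only [hX, eval_add, eval_X, eval_C]
      rw [← add_assoc, binTransform_natCast_mul_succ, add_right_comm n 1 r, binTransform_succ]
      push_cast
      ring

end TransformedRecurrence

theorem coeff_sum_C_mul_mul_map_X_sub_C_pow {R : Type*} [CommRing R] [Nontrivial R] {d r : ℕ}
    (c : Fin (d + 1) → R) (L : Fin (d + 1) → R[X][X]) (hL : ∀ i, (L i).natDegree ≤ r) (a : R) :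
    (∑ i, C (C (c i)) * L i * ((X - C a) ^ (i : ℕ)).map C).coeff (r + d) =
      C (c (Fin.last d)) * (L (Fin.last d)).coeff r := by
  have hdeg : ∀ i : ℕ, (((X - C a) ^ i).map C : R[X][X]).natDegree = i := fun i => by
    rw [((monic_X_sub_C a).pow i).natDegree_map, (monic_X_sub_C a).natDegree_pow,
      natDegree_X_sub_C, mul_one]
  rw [finsetSum_coeff, Fintype.sum_eq_single (Fin.last d)]
  · have hmonic := (((monic_X_sub_C a).pow d).map (C : R →+* R[X])).coeff_natDegree
    rw [hdeg] at hmonic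
    rw [Fin.val_last, coeff_mul_add_eq_of_natDegree_le ((natDegree_C_mul_le _ _).trans (hL _))
      (hdeg d).le, coeff_C_mul, hmonic, mul_one]
  · intro i hi
    refine coeff_eq_zero_of_natDegree_lt (natDegree_mul_le.trans_lt ?_)
    have := (natDegree_C_mul_le (C (c i)) _).trans (hL i)
    have := Fin.val_lt_last hi
    rw [hdeg]
    omega

theorem exists_recurrenceOp_binTransform_eq_zero (α β : ℂ) (F : ℕ → ℂ) (d : ℕ)
    (p : Fin (d + 1) → ℂ[X]) (hlead : p (Fin.last d) ≠ 0)
    (hrec : ∀ n : ℕ, ∑ i : Fin (d + 1), (p i).eval (n : ℂ) * F (n + i) = 0) :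
    ∃ L : ℂ[X][X], L ≠ 0 ∧ recurrenceOp L (binTransform α β F) = 0 := by
  set r := univ.sup fun i => (p i).natDegree
  choose L hdeg hcoeff hL using fun i => exists_recurrenceOp_binTransform_mul α β (p i)
    (le_sup (f := fun i => (p i).natDegree) (mem_univ i))
  set M : Fin (d + 1) → ℂ[X][X] := fun i =>
    C (C (β ^ (d - i))) * L i * ((X - C α) ^ (i : ℕ)).map C
  have hM : ∀ i n, recurrenceOp (M i) (binTransform α β F) n =
      β ^ d * binTransform α β (fun k => (p i).eval (k : ℂ) * F (k + i)) (n + r) := by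
    intro i n
    rw [recurrenceOp_mul_map_C, recurrenceOp_C_mul, ← pow_smul_binTransform_shift, map_smul,
      ← hL, eval_C, Pi.smul_apply, smul_eq_mul, ← mul_assoc,
      pow_sub_mul_pow _ (Nat.lt_succ_iff.mp i.isLt)]
  refine ⟨∑ i, M i, fun h => hlead ?_, ?_⟩
  · have htop := coeff_sum_C_mul_mul_map_X_sub_C_pow (fun i : Fin (d + 1) => β ^ (d - i)) L hdeg α
    rwa [h, coeff_zero, Fin.val_last, Nat.sub_self, pow_zero, C_1, one_mul, hcoeff, eq_comm,
      taylor_eq_zero] at htop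
  · funext n
    rw [map_sum, LinearMap.coe_sum, Finset.sum_apply, Finset.sum_apply]
    simp only [hM, ← mul_sum, ← binTransform_sum, hrec]
    simp [binTransform]

/-- The set of p-recursive sequences is closed under the generalized binomial transform:
if `F` satisfies a linear homogeneous recurrence with polynomial coefficients whose leading
coefficient is a nonzero polynomial, then so does `B_{α,β} F` (with coefficients not all zero). -/
theorem stmt_9 (F : ℕ → ℂ) (d : ℕ) (p : Fin (d + 1) → Polynomial ℂ)
    (hlead : p (Fin.last d) ≠ 0)
    (hrec : ∀ n : ℕ, ∑ i : Fin (d + 1), (p i).eval (n : ℂ) * F (n + i) = 0)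
    (α β : ℂ) :
    ∃ (e : ℕ) (q : Fin (e + 1) → Polynomial ℂ), (∃ j, q j ≠ 0) ∧
      ∀ n : ℕ, ∑ j : Fin (e + 1), (q j).eval (n : ℂ) * binTransform α β F (n + j) = 0 := by
  obtain ⟨L, hL, hLF⟩ := exists_recurrenceOp_binTransform_eq_zero α β F d p hlead hrec
  exact exists_fin_recurrence_of_recurrenceOp_eq_zero hL hLF
end
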